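/- arXiv:0804.0917 — 2 statements merged into one kernel-verified Lean document; each statement's English description precedes it below -/
import Mathlib

section
/- View k⟨X⟩ as the free left k⟨X⟩-module mod_{k⟨X⟩}⟨I⟩ with one generator I. Let S, T ⊆ k⟨X⟩ be sets of monic polynomials, < a monomial well order on X*, and A = k⟨X⟩/Id(S). Then (S, T) is a Gröbner–Shirshov pair for the left A-module M = A / A(T + Id(S)) if and only if S is a Gröbner–Shirshov basis in the algebra k⟨X⟩ with respect to < and (S·X* ∪ T)·I = {s·u·I : s ∈ S, u ∈ X*} ∪ {t·I : t ∈ T} is a Gröbner–Shirshov basis in the free module mod_{k⟨X⟩}⟨I⟩ with respect to the induced order ≺ on X*I. -/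
/-! Theorem 3.4 (2): `(S, T)` is a Gröbner–Shirshov pair for the `A`-module
`A/A(T + Id(S))` iff `S` is a Gröbner–Shirshov basis in `k⟨X⟩` and
`(S·X* ∪ T)·I` is a Gröbner–Shirshov basis in the free module `mod_{k⟨X⟩}⟨I⟩`
on one generator `I` (identified with `k⟨X⟩` itself, `I = 1`). -/

open MonoidAlgebra

/-- The free associative algebra `k⟨X⟩`, with `k`-basis the free monoid `X*`. -/
abbrev FreeAssocAlg (k X : Type*) [Field k] : Type _ := MonoidAlgebra k (FreeMonoid X)

variable {k X : Type*} [Field k]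

/-- `w` is the leading word of `f ∈ k⟨X⟩`. -/
def LeadWord (lt : FreeMonoid X → FreeMonoid X → Prop) (f : FreeAssocAlg k X)
    (w : FreeMonoid X) : Prop :=
  f.coeff w ≠ 0 ∧ ∀ u : FreeMonoid X, f.coeff u ≠ 0 → u ≠ w → lt u w

/-- `f ∈ k⟨X⟩` is monic. -/
def IsMonicPoly (lt : FreeMonoid X → FreeMonoid X → Prop) (f : FreeAssocAlg k X) : Prop :=
  ∃ w : FreeMonoid X, LeadWord lt f w ∧ f.coeff w = 1

/-- `h ≡ 0 mod (S, w)`: `h = ∑ αᵢ aᵢ sᵢ bᵢ` with `sᵢ ∈ S` and `aᵢ·s̄ᵢ·bᵢ < w`. -/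
def TrivialModAlg (lt : FreeMonoid X → FreeMonoid X → Prop) (S : Set (FreeAssocAlg k X))
    (h : FreeAssocAlg k X) (w : FreeMonoid X) : Prop :=
  ∃ (n : ℕ) (α : Fin n → k) (a b : Fin n → FreeMonoid X) (s : Fin n → FreeAssocAlg k X)
    (ws : Fin n → FreeMonoid X),
      (∀ i, s i ∈ S) ∧ (∀ i, LeadWord lt (s i) (ws i)) ∧
      h = ∑ i, MonoidAlgebra.single (a i) (α i) * s i * MonoidAlgebra.single (b i) (1 : k) ∧
      ∀ i, lt (a i * ws i * b i) w

/-- `S` is a Gröbner–Shirshov basis in `k⟨X⟩` (closed under composition). -/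
def IsGSBasisAlg (lt : FreeMonoid X → FreeMonoid X → Prop)
    (S : Set (FreeAssocAlg k X)) : Prop :=
  (∀ f ∈ S, ∀ g ∈ S, ∀ wf wg a b : FreeMonoid X,
    LeadWord lt f wf → LeadWord lt g wg → wf * a = b * wg → b.length < wf.length →
    TrivialModAlg lt S
      (f * MonoidAlgebra.single a (1 : k) - MonoidAlgebra.single b (1 : k) * g) (wf * a)) ∧
  (∀ f ∈ S, ∀ g ∈ S, ∀ wf wg a b : FreeMonoid X,
    LeadWord lt f wf → LeadWord lt g wg → a * wf * b = wg →
    TrivialModAlg lt S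
      (MonoidAlgebra.single a (1 : k) * f * MonoidAlgebra.single b (1 : k) - g) wg)

/-- `h ≡ 0 mod (S, T; w)`: `h = ∑ αᵢ aᵢ sᵢ bᵢ + ∑ βⱼ cⱼ tⱼ` with `sᵢ ∈ S`, `tⱼ ∈ T`,
`aᵢ·s̄ᵢ·bᵢ < w` and `cⱼ·t̄ⱼ < w`. -/
def TrivialModPair (lt : FreeMonoid X → FreeMonoid X → Prop)
    (S T : Set (FreeAssocAlg k X)) (h : FreeAssocAlg k X) (w : FreeMonoid X) : Prop :=
  ∃ (n m : ℕ) (α : Fin n → k) (a b : Fin n → FreeMonoid X) (s : Fin n → FreeAssocAlg k X)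
    (ws : Fin n → FreeMonoid X) (β : Fin m → k) (c : Fin m → FreeMonoid X)
    (t : Fin m → FreeAssocAlg k X) (wt : Fin m → FreeMonoid X),
      (∀ i, s i ∈ S) ∧ (∀ i, LeadWord lt (s i) (ws i)) ∧
      (∀ j, t j ∈ T) ∧ (∀ j, LeadWord lt (t j) (wt j)) ∧
      h = (∑ i, MonoidAlgebra.single (a i) (α i) * s i * MonoidAlgebra.single (b i) (1 : k))
            + ∑ j, MonoidAlgebra.single (c j) (β j) * t j ∧
      (∀ i, lt (a i * ws i * b i) w) ∧ (∀ j, lt (c j * wt j) w)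

/-- `(S, T)` is a Gröbner–Shirshov pair: `S` is closed under composition, `T` is closed
under right-justified composition w.r.t. `S` and `T`, and every mixed composition
`(f,g)_w = a·f·b − c·g` (`f ∈ S`, `g ∈ T`, `w = a·f̄·b = c·ḡ`, `deg f̄ > deg c`) is
trivial mod `(S, T; w)`. -/
def IsGSPair (lt : FreeMonoid X → FreeMonoid X → Prop)
    (S T : Set (FreeAssocAlg k X)) : Prop :=
  IsGSBasisAlg lt S ∧
  (∀ f ∈ T, ∀ g ∈ T, ∀ wf wg a : FreeMonoid X,
    LeadWord lt f wf → LeadWord lt g wg → wf = a * wg →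
    TrivialModPair lt S T (f - MonoidAlgebra.single a (1 : k) * g) wf) ∧
  (∀ f ∈ S, ∀ g ∈ T, ∀ wf wg a b c : FreeMonoid X,
    LeadWord lt f wf → LeadWord lt g wg → a * wf * b = c * wg → c.length < wf.length →
    TrivialModPair lt S T
      (MonoidAlgebra.single a (1 : k) * f * MonoidAlgebra.single b (1 : k)
        - MonoidAlgebra.single c (1 : k) * g) (a * wf * b))

/-- `h` is trivial mod `(R, w)` in the free module `mod_{k⟨X⟩}⟨I⟩ = k⟨X⟩·I`:
`h = ∑ αᵢ aᵢ rᵢ` with `rᵢ ∈ R` and `aᵢ·r̄ᵢ ≺ w`. -/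
def TrivialModLeft (lt : FreeMonoid X → FreeMonoid X → Prop) (R : Set (FreeAssocAlg k X))
    (h : FreeAssocAlg k X) (w : FreeMonoid X) : Prop :=
  ∃ (n : ℕ) (α : Fin n → k) (a : Fin n → FreeMonoid X) (r : Fin n → FreeAssocAlg k X)
    (wr : Fin n → FreeMonoid X),
      (∀ i, r i ∈ R) ∧ (∀ i, LeadWord lt (r i) (wr i)) ∧
      h = ∑ i, MonoidAlgebra.single (a i) (α i) * r i ∧
      ∀ i, lt (a i * wr i) w

/-- `R` is a Gröbner–Shirshov basis in the free module `mod_{k⟨X⟩}⟨I⟩` on one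
generator `I` (identified with `k⟨X⟩` itself). -/
def IsGSBasisModI (lt : FreeMonoid X → FreeMonoid X → Prop)
    (R : Set (FreeAssocAlg k X)) : Prop :=
  ∀ f ∈ R, ∀ g ∈ R, ∀ wf wg a : FreeMonoid X,
    LeadWord lt f wf → LeadWord lt g wg → wf = a * wg →
    TrivialModLeft lt R (f - MonoidAlgebra.single a (1 : k) * g) wf

/-! ### Auxiliary lemmas -/

section Aux

variable {lt : FreeMonoid X → FreeMonoid X → Prop}

theorem fm_split {p q r s : FreeMonoid X} (h : p * q = r * s) (hle : r.length ≤ p.length) :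
    ∃ m, p = r * m ∧ s = m * q := by
  rcases List.append_eq_append_iff.mp (congrArg FreeMonoid.toList h) with
    ⟨a', h1, h2⟩ | ⟨c', h1, h2⟩
  · have hlen : FreeMonoid.toList r = FreeMonoid.toList p ++ a' := h1
    have : a'.length = 0 := by
      have := congrArg List.length hlen
      simp only [List.length_append] at this
      have hrp : r.length = p.length + a'.length := this
      omega
    rcases List.length_eq_zero_iff.mp this with rfl
    refine ⟨1, ?_, ?_⟩
    · have h3 : FreeMonoid.toList p = FreeMonoid.toList r := by simpa using hlen.symm
      simpa [mul_one] using congrArg FreeMonoid.ofList h3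
    · have hq : FreeMonoid.toList q = FreeMonoid.toList s := by simpa using h2
      simpa [one_mul] using (congrArg FreeMonoid.ofList hq).symm
  · exact ⟨FreeMonoid.ofList c', congrArg FreeMonoid.ofList h1, congrArg FreeMonoid.ofList h2⟩

theorem lt_one_lt (hwo : IsWellOrder (FreeMonoid X) lt)
    (hmono : ∀ u v a b : FreeMonoid X, lt u v → lt (a * u * b) (a * v * b))
    {u : FreeMonoid X} (hu : u ≠ 1) : lt 1 u := by
  haveI := hwo
  rcases trichotomous_of lt 1 u with h | h | h
  · exact h
  · exact absurd h.symm hu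
  · exfalso
    have hstep : ∀ n : ℕ, lt (u ^ (n + 2)) (u ^ (n + 1)) := by
      intro n
      simpa [pow_succ, mul_one] using hmono u 1 (u ^ (n + 1)) 1 h
    exact (RelEmbedding.natGT (fun n => u ^ (n + 1)) hstep).not_wellFounded
      hwo.wf

theorem lw_unique (hwo : IsWellOrder (FreeMonoid X) lt) {f : FreeAssocAlg k X}
    {w w' : FreeMonoid X} (h : LeadWord lt f w) (h' : LeadWord lt f w') : w = w' := by
  haveI := hwo
  by_contra hne
  exact asymm (h.2 w' h'.1 (Ne.symm hne)) (h'.2 w h.1 hne)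

theorem single_coeff_mul_single {f : FreeAssocAlg k X} (u x : FreeMonoid X) (r : k) :
    (f * MonoidAlgebra.single u r).coeff (x * u) = f.coeff x * r :=
  MonoidAlgebra.coeff_mul_single_mul f r u x

theorem lw_mul_single (hmono : ∀ u v a b : FreeMonoid X, lt u v → lt (a * u * b) (a * v * b))
    {f : FreeAssocAlg k X} {w : FreeMonoid X} (h : LeadWord lt f w) (u : FreeMonoid X) :
    LeadWord lt (f * MonoidAlgebra.single u (1 : k)) (w * u) := by
  classical
  constructor
  · rw [single_coeff_mul_single]; simpa using h.1
  · intro v hv hne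
    have hv' : v ∈ (f * MonoidAlgebra.single u (1:k)).coeff.support := Finsupp.mem_support_iff.mpr hv
    have := MonoidAlgebra.support_coeff_mul_single_subset f (1:k) u hv'
    rcases Finset.mem_image.mp this with ⟨x, hx, rfl⟩
    have hxw : x ≠ w := fun hxw => hne (by rw [hxw])
    have hlt := h.2 x (Finsupp.mem_support_iff.mp hx) hxw
    simpa using hmono x w 1 u hlt

theorem mul_single_shift (f : FreeAssocAlg k X) (x : FreeMonoid X) (c : k) :
    f * MonoidAlgebra.single x c
      = MonoidAlgebra.single (1 : FreeMonoid X) c * (f * MonoidAlgebra.single x (1 : k)) := by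
  have h : MonoidAlgebra.single x c
      = MonoidAlgebra.single (1 : FreeMonoid X) c * MonoidAlgebra.single x (1 : k) := by
    rw [MonoidAlgebra.single_mul_single, one_mul, mul_one]
  rw [h, ← mul_assoc, ← MonoidAlgebra.single_one_comm, mul_assoc]

variable {R S T : Set (FreeAssocAlg k X)}

/-! #### Closure properties of `TrivialModLeft` -/

theorem tml_zero (w : FreeMonoid X) : TrivialModLeft lt R 0 w :=
  ⟨0, Fin.elim0, Fin.elim0, Fin.elim0, Fin.elim0, fun i => i.elim0, fun i => i.elim0,
    by simp, fun i => i.elim0⟩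

theorem tml_add {h₁ h₂ : FreeAssocAlg k X} {w : FreeMonoid X}
    (H1 : TrivialModLeft lt R h₁ w) (H2 : TrivialModLeft lt R h₂ w) :
    TrivialModLeft lt R (h₁ + h₂) w := by
  obtain ⟨n₁, α₁, a₁, r₁, w₁, hm1, hl1, he1, hb1⟩ := H1
  obtain ⟨n₂, α₂, a₂, r₂, w₂, hm2, hl2, he2, hb2⟩ := H2
  refine ⟨n₁ + n₂, Fin.addCases α₁ α₂, Fin.addCases a₁ a₂, Fin.addCases r₁ r₂,
    Fin.addCases w₁ w₂, ?_, ?_, ?_, ?_⟩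
  · intro i; refine i.addCases (fun j => ?_) (fun j => ?_) <;> simp [hm1, hm2]
  · intro i; refine i.addCases (fun j => ?_) (fun j => ?_) <;> simp [hl1, hl2]
  · rw [he1, he2, Fin.sum_univ_add]; simp
  · intro i; refine i.addCases (fun j => ?_) (fun j => ?_) <;> simp [hb1, hb2]

theorem tml_single {r : FreeAssocAlg k X} {wr w a : FreeMonoid X} (α : k)
    (hr : r ∈ R) (hwr : LeadWord lt r wr) (hb : lt (a * wr) w) :
    TrivialModLeft lt R (MonoidAlgebra.single a α * r) w :=
  ⟨1, fun _ => α, fun _ => a, fun _ => r, fun _ => wr, fun _ => hr, fun _ => hwr,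
    by simp, fun _ => hb⟩

theorem tml_sum {ι : Type*} (s : Finset ι) (F : ι → FreeAssocAlg k X) {w : FreeMonoid X}
    (hF : ∀ i ∈ s, TrivialModLeft lt R (F i) w) :
    TrivialModLeft lt R (∑ i ∈ s, F i) w :=
  Finset.sum_induction F (fun h => TrivialModLeft lt R h w) (fun _ _ => tml_add)
    (tml_zero w) hF

theorem tml_neg {h : FreeAssocAlg k X} {w : FreeMonoid X}
    (H : TrivialModLeft lt R h w) : TrivialModLeft lt R (-h) w := by
  obtain ⟨n, α, a, r, wr, hm, hl, he, hb⟩ := H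
  refine ⟨n, fun i => -α i, a, r, wr, hm, hl, ?_, hb⟩
  rw [he, ← Finset.sum_neg_distrib]
  refine Finset.sum_congr rfl fun i _ => ?_
  simp [← neg_mul]

theorem tml_mul_single (hmono : ∀ u v a b : FreeMonoid X, lt u v → lt (a * u * b) (a * v * b))
    {h : FreeAssocAlg k X} {w : FreeMonoid X} (c : FreeMonoid X) (γ : k)
    (H : TrivialModLeft lt R h w) :
    TrivialModLeft lt R (MonoidAlgebra.single c γ * h) (c * w) := by
  obtain ⟨n, α, a, r, wr, hm, hl, he, hb⟩ := H
  refine ⟨n, fun i => γ * α i, fun i => c * a i, r, wr, hm, hl, ?_, ?_⟩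
  · rw [he, Finset.mul_sum]
    refine Finset.sum_congr rfl fun i _ => ?_
    rw [← mul_assoc, MonoidAlgebra.single_mul_single]
  · intro i
    simpa [mul_assoc] using hmono (a i * wr i) w c 1 (hb i)

/-! #### Closure properties of `TrivialModPair` -/

theorem tmp_zero (w : FreeMonoid X) : TrivialModPair lt S T 0 w :=
  ⟨0, 0, Fin.elim0, Fin.elim0, Fin.elim0, Fin.elim0, Fin.elim0, Fin.elim0, Fin.elim0,
    Fin.elim0, Fin.elim0, fun i => i.elim0, fun i => i.elim0, fun j => j.elim0,
    fun j => j.elim0, by simp, fun i => i.elim0, fun j => j.elim0⟩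

theorem tmp_add {h₁ h₂ : FreeAssocAlg k X} {w : FreeMonoid X}
    (H1 : TrivialModPair lt S T h₁ w) (H2 : TrivialModPair lt S T h₂ w) :
    TrivialModPair lt S T (h₁ + h₂) w := by
  obtain ⟨n₁, m₁, α₁, a₁, b₁, s₁, ws₁, β₁, c₁, t₁, wt₁, hs1, hls1, ht1, hlt1, he1, hbs1, hbt1⟩ := H1
  obtain ⟨n₂, m₂, α₂, a₂, b₂, s₂, ws₂, β₂, c₂, t₂, wt₂, hs2, hls2, ht2, hlt2, he2, hbs2, hbt2⟩ := H2
  refine ⟨n₁ + n₂, m₁ + m₂, Fin.addCases α₁ α₂, Fin.addCases a₁ a₂, Fin.addCases b₁ b₂,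
    Fin.addCases s₁ s₂, Fin.addCases ws₁ ws₂, Fin.addCases β₁ β₂, Fin.addCases c₁ c₂,
    Fin.addCases t₁ t₂, Fin.addCases wt₁ wt₂, ?_, ?_, ?_, ?_, ?_, ?_, ?_⟩
  · intro i; refine i.addCases (fun j => ?_) (fun j => ?_) <;> simp [hs1, hs2]
  · intro i; refine i.addCases (fun j => ?_) (fun j => ?_) <;> simp [hls1, hls2]
  · intro j; refine j.addCases (fun j => ?_) (fun j => ?_) <;> simp [ht1, ht2]
  · intro j; refine j.addCases (fun j => ?_) (fun j => ?_) <;> simp [hlt1, hlt2]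
  · rw [he1, he2, Fin.sum_univ_add, Fin.sum_univ_add]
    simp only [Fin.addCases_left, Fin.addCases_right]
    abel
  · intro i; refine i.addCases (fun j => ?_) (fun j => ?_) <;> simp [hbs1, hbs2]
  · intro j; refine j.addCases (fun j => ?_) (fun j => ?_) <;> simp [hbt1, hbt2]

theorem tmp_singleS {s : FreeAssocAlg k X} {ws w a b : FreeMonoid X} (α : k)
    (hs : s ∈ S) (hws : LeadWord lt s ws) (hb : lt (a * ws * b) w) :
    TrivialModPair lt S T (MonoidAlgebra.single a α * s * MonoidAlgebra.single b (1 : k)) w :=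
  ⟨1, 0, fun _ => α, fun _ => a, fun _ => b, fun _ => s, fun _ => ws, Fin.elim0, Fin.elim0,
    Fin.elim0, Fin.elim0, fun _ => hs, fun _ => hws, fun j => j.elim0, fun j => j.elim0,
    by simp, fun _ => hb, fun j => j.elim0⟩

theorem tmp_singleT {t : FreeAssocAlg k X} {wt w c : FreeMonoid X} (β : k)
    (ht : t ∈ T) (hwt : LeadWord lt t wt) (hb : lt (c * wt) w) :
    TrivialModPair lt S T (MonoidAlgebra.single c β * t) w :=
  ⟨0, 1, Fin.elim0, Fin.elim0, Fin.elim0, Fin.elim0, Fin.elim0, fun _ => β, fun _ => c,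
    fun _ => t, fun _ => wt, fun i => i.elim0, fun i => i.elim0, fun _ => ht, fun _ => hwt,
    by simp, fun i => i.elim0, fun _ => hb⟩

theorem tmp_sum {ι : Type*} (s : Finset ι) (F : ι → FreeAssocAlg k X) {w : FreeMonoid X}
    (hF : ∀ i ∈ s, TrivialModPair lt S T (F i) w) :
    TrivialModPair lt S T (∑ i ∈ s, F i) w :=
  Finset.sum_induction F (fun h => TrivialModPair lt S T h w) (fun _ _ => tmp_add)
    (tmp_zero w) hF

theorem tmp_neg {h : FreeAssocAlg k X} {w : FreeMonoid X}
    (H : TrivialModPair lt S T h w) : TrivialModPair lt S T (-h) w := by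
  obtain ⟨n, m, α, a, b, s, ws, β, c, t, wt, hs, hls, ht, hlt, he, hbs, hbt⟩ := H
  refine ⟨n, m, fun i => -α i, a, b, s, ws, fun j => -β j, c, t, wt, hs, hls, ht, hlt, ?_,
    hbs, hbt⟩
  rw [he, neg_add, ← Finset.sum_neg_distrib, ← Finset.sum_neg_distrib]
  congr 1 <;> refine Finset.sum_congr rfl fun i _ => ?_ <;> simp [← neg_mul]

/-! #### Conversions between the triviality notions -/

theorem pair_to_left (hmono : ∀ u v a b : FreeMonoid X, lt u v → lt (a * u * b) (a * v * b))
    {h : FreeAssocAlg k X} {w : FreeMonoid X} (H : TrivialModPair lt S T h w) :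
    TrivialModLeft lt
      ({x : FreeAssocAlg k X | ∃ s ∈ S, ∃ u : FreeMonoid X,
          x = s * MonoidAlgebra.single u (1 : k)} ∪ T) h w := by
  obtain ⟨n, m, α, a, b, s, ws, β, c, t, wt, hs, hls, ht, hlt, he, hbs, hbt⟩ := H
  rw [he]
  refine tml_add (tml_sum _ _ fun i _ => ?_) (tml_sum _ _ fun j _ => ?_)
  · rw [mul_assoc]
    refine tml_single (α i) (Set.mem_union_left _ ⟨s i, hs i, b i, rfl⟩)
      (lw_mul_single hmono (hls i) (b i)) ?_
    rw [← mul_assoc]; exact hbs i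
  · exact tml_single (β j) (Set.mem_union_right _ (ht j)) (hlt j) (hbt j)

theorem left_to_pair (hwo : IsWellOrder (FreeMonoid X) lt)
    (hmono : ∀ u v a b : FreeMonoid X, lt u v → lt (a * u * b) (a * v * b))
    (hSmonic : ∀ s ∈ S, IsMonicPoly lt s)
    {h : FreeAssocAlg k X} {w : FreeMonoid X}
    (H : TrivialModLeft lt
      ({x : FreeAssocAlg k X | ∃ s ∈ S, ∃ u : FreeMonoid X,
          x = s * MonoidAlgebra.single u (1 : k)} ∪ T) h w) :
    TrivialModPair lt S T h w := by
  obtain ⟨n, α, a, r, wr, hm, hl, he, hb⟩ := H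
  rw [he]
  refine tmp_sum _ _ fun i _ => ?_
  rcases hm i with hmem | hT
  · obtain ⟨s, hsS, u, hru⟩ := hmem
    obtain ⟨ws, hws, -⟩ := hSmonic s hsS
    have hlw : LeadWord lt (r i) (ws * u) := hru ▸ lw_mul_single hmono hws u
    have hwr : wr i = ws * u := lw_unique hwo (hl i) hlw
    have hb' : lt (a i * ws * u) w := by
      have hbi := hb i
      rw [hwr] at hbi
      rw [mul_assoc]; exact hbi
    have hterm : MonoidAlgebra.single (a i) (α i) * r i
        = MonoidAlgebra.single (a i) (α i) * s * MonoidAlgebra.single u (1 : k) := by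
      rw [hru, mul_assoc]
    rw [hterm]
    exact tmp_singleS (α i) hsS hws hb'
  · exact tmp_singleT (α i) hT (hl i) (hb i)

theorem alg_mul_to_left (hmono : ∀ u v a b : FreeMonoid X, lt u v → lt (a * u * b) (a * v * b))
    {h : FreeAssocAlg k X} {w : FreeMonoid X} (H : TrivialModAlg lt S h w) (u : FreeMonoid X) :
    TrivialModLeft lt
      ({x : FreeAssocAlg k X | ∃ s ∈ S, ∃ u : FreeMonoid X,
          x = s * MonoidAlgebra.single u (1 : k)} ∪ T)
      (h * MonoidAlgebra.single u (1 : k)) (w * u) := by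
  obtain ⟨n, α, a, b, s, ws, hm, hl, he, hb⟩ := H
  rw [he, Finset.sum_mul]
  refine tml_sum _ _ fun i _ => ?_
  have hterm : MonoidAlgebra.single (a i) (α i) * s i * MonoidAlgebra.single (b i) (1 : k)
        * MonoidAlgebra.single u (1 : k)
      = MonoidAlgebra.single (a i) (α i) * (s i * MonoidAlgebra.single (b i * u) (1 : k)) := by
    simp only [mul_assoc, MonoidAlgebra.single_mul_single, one_mul]
  rw [hterm]
  refine tml_single (α i) (Set.mem_union_left _ ⟨s i, hm i, b i * u, rfl⟩)
    (lw_mul_single hmono (hl i) _) ?_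
  have := hmono (a i * ws i * b i) w 1 u (hb i)
  simpa [mul_assoc] using this

theorem alg_neg {h : FreeAssocAlg k X} {w : FreeMonoid X}
    (H : TrivialModAlg lt S h w) : TrivialModAlg lt S (-h) w := by
  obtain ⟨n, α, a, b, s, ws, hm, hl, he, hb⟩ := H
  refine ⟨n, fun i => -α i, a, b, s, ws, hm, hl, ?_, hb⟩
  rw [he, ← Finset.sum_neg_distrib]
  refine Finset.sum_congr rfl fun i _ => ?_
  simp [← neg_mul]

/-! #### The key "trivial splitting" lemma -/

theorem split_lemma (hwo : IsWellOrder (FreeMonoid X) lt)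
    (hmono : ∀ u v a b : FreeMonoid X, lt u v → lt (a * u * b) (a * v * b))
    {s g : FreeAssocAlg k X} {ws wg : FreeMonoid X}
    (hsS : s ∈ S) (hls : LeadWord lt s ws) (hcs : s.coeff ws = 1)
    (hgR : g ∈ ({x : FreeAssocAlg k X | ∃ s ∈ S, ∃ u : FreeMonoid X,
          x = s * MonoidAlgebra.single u (1 : k)} ∪ T))
    (hlg : LeadWord lt g wg) (hcg : g.coeff wg = 1) (e : FreeMonoid X) :
    TrivialModLeft lt
      ({x : FreeAssocAlg k X | ∃ s ∈ S, ∃ u : FreeMonoid X,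
          x = s * MonoidAlgebra.single u (1 : k)} ∪ T)
      (s * MonoidAlgebra.single (e * wg) (1 : k) - MonoidAlgebra.single (ws * e) (1 : k) * g)
      (ws * (e * wg)) := by
  classical
  set p : FreeAssocAlg k X := MonoidAlgebra.single wg (1 : k) - g with hp
  set q : FreeAssocAlg k X := s - MonoidAlgebra.single ws (1 : k) with hq
  have key : s * MonoidAlgebra.single (e * wg) (1 : k)
        - MonoidAlgebra.single (ws * e) (1 : k) * g
      = s * MonoidAlgebra.single e (1 : k) * p
        + q * (MonoidAlgebra.single e (1 : k) * g) := by
    have h2 : MonoidAlgebra.single (ws * e) (1 : k) * g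
        = MonoidAlgebra.single ws (1 : k) * (MonoidAlgebra.single e (1 : k) * g) := by
      rw [← mul_assoc, MonoidAlgebra.single_mul_single, mul_one]
    rw [hp, hq, h2]
    simp only [mul_sub, sub_mul, mul_assoc, MonoidAlgebra.single_mul_single, one_mul, mul_one]
    abel
  have hpsupp : ∀ v ∈ p.coeff.support, lt v wg := by
    intro v hv
    have hvne : v ≠ wg := by
      intro hvv
      apply Finsupp.mem_support_iff.mp hv
      rw [hvv, hp]
      have hrw : (MonoidAlgebra.single wg (1:k) - g).coeff wg
          = (MonoidAlgebra.single wg (1:k)).coeff wg - g.coeff wg := rfl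
      rw [hrw, hcg]
      simp [MonoidAlgebra.single_apply]
    have hgv : g.coeff v ≠ 0 := by
      have h0 := Finsupp.mem_support_iff.mp hv
      rw [hp] at h0
      have hrw : (MonoidAlgebra.single wg (1:k) - g).coeff v
          = (MonoidAlgebra.single wg (1:k)).coeff v - g.coeff v := rfl
      rw [hrw, MonoidAlgebra.single_apply, if_neg (fun hh => hvne hh.symm)] at h0
      intro hgg; rw [hgg] at h0; simp at h0
    exact hlg.2 v hgv hvne
  have hqsupp : ∀ v ∈ q.coeff.support, lt v ws := by
    intro v hv
    have hvne : v ≠ ws := by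
      intro hvv
      apply Finsupp.mem_support_iff.mp hv
      rw [hvv, hq]
      have hrw : (s - MonoidAlgebra.single ws (1:k)).coeff ws
          = s.coeff ws - (MonoidAlgebra.single ws (1:k)).coeff ws := rfl
      rw [hrw, hcs]
      simp [MonoidAlgebra.single_apply]
    have hsv : s.coeff v ≠ 0 := by
      have h0 := Finsupp.mem_support_iff.mp hv
      rw [hq] at h0
      have hrw : (s - MonoidAlgebra.single ws (1:k)).coeff v
          = s.coeff v - (MonoidAlgebra.single ws (1:k)).coeff v := rfl
      rw [hrw, MonoidAlgebra.single_apply, if_neg (fun hh => hvne hh.symm)] at h0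
      intro hss; rw [hss] at h0; simp at h0
    exact hls.2 v hsv hvne
  rw [key]
  refine tml_add ?_ ?_
  · have hrep : s * MonoidAlgebra.single e (1 : k) * p
        = ∑ v ∈ p.coeff.support, MonoidAlgebra.single (1 : FreeMonoid X) (p.coeff v)
            * (s * MonoidAlgebra.single (e * v) (1 : k)) := by
      conv_lhs => rw [← MonoidAlgebra.sum_coeff_single p]
      rw [Finsupp.sum, Finset.mul_sum]
      refine Finset.sum_congr rfl fun v hv => ?_
      rw [mul_assoc, MonoidAlgebra.single_mul_single, one_mul, mul_single_shift]
    rw [hrep]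
    refine tml_sum _ _ fun v hv => ?_
    refine tml_single (p.coeff v) (Set.mem_union_left _ ⟨s, hsS, e * v, rfl⟩)
      (lw_mul_single hmono hls _) ?_
    have := hmono v wg (ws * e) 1 (hpsupp v hv)
    simpa [mul_assoc] using this
  · have hrep : q * (MonoidAlgebra.single e (1 : k) * g)
        = ∑ v ∈ q.coeff.support, MonoidAlgebra.single (v * e) (q.coeff v) * g := by
      conv_lhs => rw [← MonoidAlgebra.sum_coeff_single q]
      rw [Finsupp.sum, Finset.sum_mul]
      refine Finset.sum_congr rfl fun v hv => ?_
      rw [← mul_assoc, MonoidAlgebra.single_mul_single, mul_one]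
    rw [hrep]
    refine tml_sum _ _ fun v hv => ?_
    refine tml_single (q.coeff v) hgR hlg ?_
    have := hmono v ws 1 (e * wg) (hqsupp v hv)
    simpa [mul_assoc] using this

theorem eq_single_one (hwo : IsWellOrder (FreeMonoid X) lt)
    (hmono : ∀ u v a b : FreeMonoid X, lt u v → lt (a * u * b) (a * v * b))
    {s : FreeAssocAlg k X} (hls : LeadWord lt s 1) (hcs : s.coeff 1 = 1) :
    s = MonoidAlgebra.single (1 : FreeMonoid X) (1 : k) := by
  classical
  haveI := hwo
  ext u
  by_cases hu : u = 1
  · subst hu; simp [hcs, MonoidAlgebra.single_apply]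
  · have hsu : s.coeff u = 0 := by
      by_contra hne
      exact asymm (hls.2 u hne hu) (lt_one_lt hwo hmono hu)
    rw [hsu, MonoidAlgebra.single_apply, if_neg (fun hh => hu hh.symm)]

end Aux

theorem GSpair_iff_GSB_alg_and_GSB_module
    (lt : FreeMonoid X → FreeMonoid X → Prop)
    (hwo : IsWellOrder (FreeMonoid X) lt)
    (hmono : ∀ u v a b : FreeMonoid X, lt u v → lt (a * u * b) (a * v * b))
    (S T : Set (FreeAssocAlg k X))
    (hSmonic : ∀ s ∈ S, IsMonicPoly lt s) (hTmonic : ∀ t ∈ T, IsMonicPoly lt t) :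
    IsGSPair lt S T ↔
      (IsGSBasisAlg lt S ∧
       IsGSBasisModI lt
         ({x : FreeAssocAlg k X | ∃ s ∈ S, ∃ u : FreeMonoid X,
            x = s * MonoidAlgebra.single u (1 : k)} ∪ T)) := by
  classical
  constructor
  · rintro ⟨hGS, h2, h3⟩
    refine ⟨hGS, ?_⟩
    intro f hf g hg wf wg a hlf hlg heq
    rcases hf with hfS | hfT
    · obtain ⟨s, hsS, u, rfl⟩ := hfS
      obtain ⟨ws, hws, hwsc⟩ := hSmonic s hsS
      have hwf : wf = ws * u := lw_unique hwo hlf (lw_mul_single hmono hws u)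
      subst hwf
      rcases hg with hgS | hgT
      · -- Case A : f = s·u, g = s'·u'
        obtain ⟨s', hs'S, u', rfl⟩ := hgS
        obtain ⟨ws', hws', hws'c⟩ := hSmonic s' hs'S
        have hwg : wg = ws' * u' := lw_unique hwo hlg (lw_mul_single hmono hws' u')
        subst hwg
        by_cases hlen : a.length < ws.length
        · by_cases hlen2 : (a * ws').length ≤ ws.length
          · -- inclusion composition
            obtain ⟨c, hws_eq, hu'⟩ :=
              fm_split (p := ws) (q := u) (r := a * ws') (s := u')
                (by rw [heq, mul_assoc]) hlen2
            have hcomp := hGS.2 s' hs'S s hsS ws' ws a c hws' hws hws_eq.symm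
            have H2 := alg_mul_to_left (T := T) hmono (alg_neg hcomp) u
            have hrw : s * MonoidAlgebra.single u (1:k)
                  - MonoidAlgebra.single a (1:k) * (s' * MonoidAlgebra.single u' (1:k))
                = (-(MonoidAlgebra.single a (1:k) * s' * MonoidAlgebra.single c (1:k) - s))
                    * MonoidAlgebra.single u (1:k) := by
              rw [hu']
              simp only [neg_sub, sub_mul, mul_assoc, MonoidAlgebra.single_mul_single, one_mul]
            rw [hrw]
            exact H2
          · -- intersection composition
            have hle : ws.length ≤ (a * ws').length := le_of_not_ge hlen2
            obtain ⟨d, had, hu⟩ :=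
              fm_split (p := a * ws') (q := u') (r := ws) (s := u)
                (by rw [mul_assoc, ← heq]) hle
            have hcomp := hGS.1 s hsS s' hs'S ws ws' d a hws hws' had.symm hlen
            have H2 := alg_mul_to_left (T := T) hmono hcomp u'
            have hrw : s * MonoidAlgebra.single u (1:k)
                  - MonoidAlgebra.single a (1:k) * (s' * MonoidAlgebra.single u' (1:k))
                = (s * MonoidAlgebra.single d (1:k) - MonoidAlgebra.single a (1:k) * s')
                    * MonoidAlgebra.single u' (1:k) := by
              rw [hu]
              simp only [sub_mul, mul_assoc, MonoidAlgebra.single_mul_single, one_mul]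
            rw [hrw, hu, ← mul_assoc]
            exact H2
        · -- trivial splitting case
          obtain ⟨e, hae, hu⟩ :=
            fm_split (p := a) (q := ws' * u') (r := ws) (s := u) heq.symm (le_of_not_gt hlen)
          have hgc : (s' * MonoidAlgebra.single u' (1:k)).coeff (ws' * u') = 1 := by
            rw [single_coeff_mul_single, hws'c, mul_one]
          have H := split_lemma (T := T) hwo hmono hsS hws hwsc
            (Set.mem_union_left _ ⟨s', hs'S, u', rfl⟩)
            (lw_mul_single hmono hws' u') hgc e
          rw [hu, hae]
          exact H
      · -- Case B : f = s·u, g = t ∈ T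
        obtain ⟨wt0, lwt, ct⟩ := hTmonic g hgT
        have hwg : wg = wt0 := lw_unique hwo hlg lwt
        have hgc : g.coeff wg = 1 := by rw [hwg]; exact ct
        by_cases hlen : a.length < ws.length
        · have hcomp := h3 s hsS g hgT ws wg 1 u a hws hlg (by rw [one_mul]; exact heq) hlen
          have H := pair_to_left hmono hcomp
          rw [← MonoidAlgebra.one_def, one_mul, one_mul] at H
          exact H
        · obtain ⟨e, hae, hu⟩ :=
            fm_split (p := a) (q := wg) (r := ws) (s := u) heq.symm (le_of_not_gt hlen)
          have H := split_lemma (T := T) hwo hmono hsS hws hwsc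
            (Set.mem_union_right _ hgT) hlg hgc e
          rw [hu, hae]
          exact H
    · rcases hg with hgS | hgT
      · -- Case C : f = t ∈ T, g = s'·u'
        obtain ⟨s', hs'S, u', rfl⟩ := hgS
        obtain ⟨ws', hws', hws'c⟩ := hSmonic s' hs'S
        have hwg : wg = ws' * u' := lw_unique hwo hlg (lw_mul_single hmono hws' u')
        subst hwg
        obtain ⟨wf0, lwf0, cf0⟩ := hTmonic f hfT
        have hwf0 : wf = wf0 := lw_unique hwo hlf lwf0
        have hfc : f.coeff wf = 1 := by rw [hwf0]; exact cf0
        by_cases hws'1 : ws' = 1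
        · -- degenerate case : s' = 1
          subst hws'1
          have hs'def : s' = MonoidAlgebra.single (1 : FreeMonoid X) (1 : k) :=
            eq_single_one hwo hmono hws' hws'c
          have hr0 : s' * MonoidAlgebra.single (1 : FreeMonoid X) (1 : k)
              = (1 : FreeAssocAlg k X) := by
            rw [hs'def, MonoidAlgebra.single_mul_single, MonoidAlgebra.one_def]
            norm_num
          have hwfau : wf = a * u' := by rw [heq, one_mul]
          have htarg : f - MonoidAlgebra.single a (1:k) * (s' * MonoidAlgebra.single u' (1:k))
              = f - MonoidAlgebra.single wf (1:k) := by
            have e : MonoidAlgebra.single a (1:k) * (s' * MonoidAlgebra.single u' (1:k))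
                = MonoidAlgebra.single wf (1:k) := by
              rw [hs'def]
              simp [MonoidAlgebra.single_mul_single, ← hwfau]
            rw [e]
          have hrep : f - MonoidAlgebra.single wf (1:k)
              = ∑ v ∈ (f - MonoidAlgebra.single wf (1:k)).coeff.support,
                  MonoidAlgebra.single v ((f - MonoidAlgebra.single wf (1:k)).coeff v)
                    * (s' * MonoidAlgebra.single (1 : FreeMonoid X) (1:k)) := by
            conv_lhs => rw [← MonoidAlgebra.sum_coeff_single (f - MonoidAlgebra.single wf (1:k))]
            rw [Finsupp.sum]
            exact Finset.sum_congr rfl fun v hv => by rw [hr0, mul_one]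
          rw [htarg, hrep]
          refine tml_sum _ _ fun v hv => ?_
          refine tml_single _ (Set.mem_union_left _ ⟨s', hs'S, 1, rfl⟩)
            (lw_mul_single hmono hws' 1) ?_
          have hvne : v ≠ wf := by
            intro hvv
            apply Finsupp.mem_support_iff.mp hv
            rw [hvv]
            have hrw0 : (f - MonoidAlgebra.single wf (1:k)).coeff wf
                = f.coeff wf - (MonoidAlgebra.single wf (1:k)).coeff wf := rfl
            rw [hrw0, hfc]
            simp [MonoidAlgebra.single_apply]
          have hfv : f.coeff v ≠ 0 := by
            have h0 := Finsupp.mem_support_iff.mp hv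
            have hrw0 : (f - MonoidAlgebra.single wf (1:k)).coeff v
                = f.coeff v - (MonoidAlgebra.single wf (1:k)).coeff v := rfl
            rw [hrw0, MonoidAlgebra.single_apply, if_neg (fun hh => hvne hh.symm)] at h0
            intro hff; rw [hff] at h0; simp at h0
          have hvlt := hlf.2 v hfv hvne
          simpa using hvlt
        · have hlen : (1 : FreeMonoid X).length < ws'.length := by
            have h0 : (1 : FreeMonoid X).length = 0 := rfl
            rw [h0]
            exact Nat.pos_of_ne_zero fun hz => hws'1 (FreeMonoid.length_eq_zero.mp hz)
          have hcomp := h3 s' hs'S f hfT ws' wf a u' 1 hws' hlf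
            (by rw [one_mul, mul_assoc, ← heq]) hlen
          have H := pair_to_left hmono (tmp_neg hcomp)
          have hrw : f - MonoidAlgebra.single a (1:k) * (s' * MonoidAlgebra.single u' (1:k))
              = -(MonoidAlgebra.single a (1:k) * s' * MonoidAlgebra.single u' (1:k)
                  - MonoidAlgebra.single (1 : FreeMonoid X) (1:k) * f) := by
            rw [neg_sub, ← MonoidAlgebra.one_def, one_mul, mul_assoc]
          rw [hrw, heq, show a * (ws' * u') = a * ws' * u' from (mul_assoc a ws' u').symm]
          exact H
      · -- Case D : f, g ∈ T
        exact pair_to_left hmono (h2 f hfT g hgT wf wg a hlf hlg heq)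
  · rintro ⟨hGS, hMod⟩
    refine ⟨hGS, ?_, ?_⟩
    · intro f hf g hg wf wg a hlf hlg heq
      exact left_to_pair hwo hmono hSmonic
        (hMod f (Set.mem_union_right _ hf) g (Set.mem_union_right _ hg) wf wg a hlf hlg heq)
    · intro f hf g hg wf wg a b c hlf hlg heq hlen
      by_cases hac : a.length ≤ c.length
      · obtain ⟨c', hc, hwfb⟩ :=
          fm_split (p := c) (q := wg) (r := a) (s := wf * b) (by rw [← heq, mul_assoc]) hac
        have H := hMod (f * MonoidAlgebra.single b (1:k))
          (Set.mem_union_left _ ⟨f, hf, b, rfl⟩) g (Set.mem_union_right _ hg)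
          (wf * b) wg c' (lw_mul_single hmono hlf b) hlg hwfb
        have H2 := tml_mul_single hmono a (1:k) H
        have hrw : MonoidAlgebra.single a (1:k) * f * MonoidAlgebra.single b (1:k)
              - MonoidAlgebra.single c (1:k) * g
            = MonoidAlgebra.single a (1:k)
                * (f * MonoidAlgebra.single b (1:k) - MonoidAlgebra.single c' (1:k) * g) := by
          have e2 : MonoidAlgebra.single a (1:k) * (MonoidAlgebra.single c' (1:k) * g)
              = MonoidAlgebra.single (a * c') (1:k) * g := by
            rw [← mul_assoc, MonoidAlgebra.single_mul_single, mul_one]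
          rw [hc, mul_assoc (MonoidAlgebra.single a (1:k)) f, mul_sub, e2]
        refine left_to_pair hwo hmono hSmonic ?_
        rw [hrw, mul_assoc a wf b]
        exact H2
      · have hca : c.length ≤ a.length := le_of_not_ge hac
        obtain ⟨d, ha, hwg⟩ :=
          fm_split (p := a) (q := wf * b) (r := c) (s := wg) (by rw [← heq, mul_assoc]) hca
        have H := hMod g (Set.mem_union_right _ hg) (f * MonoidAlgebra.single b (1:k))
          (Set.mem_union_left _ ⟨f, hf, b, rfl⟩) wg (wf * b) d hlg
          (lw_mul_single hmono hlf b) hwg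
        have H2 := tml_mul_single hmono c (-1 : k) H
        have hrw : MonoidAlgebra.single a (1:k) * f * MonoidAlgebra.single b (1:k)
              - MonoidAlgebra.single c (1:k) * g
            = MonoidAlgebra.single c (-1 : k)
                * (g - MonoidAlgebra.single d (1:k) * (f * MonoidAlgebra.single b (1:k))) := by
          have e1 : MonoidAlgebra.single c (-1 : k) = -MonoidAlgebra.single c (1:k) := by
            simp
          have e2 : MonoidAlgebra.single c (1:k)
                * (MonoidAlgebra.single d (1:k) * (f * MonoidAlgebra.single b (1:k)))
              = MonoidAlgebra.single (c * d) (1:k) * f * MonoidAlgebra.single b (1:k) := by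
            rw [← mul_assoc, MonoidAlgebra.single_mul_single, mul_one, mul_assoc]
          rw [ha, e1, neg_mul, mul_sub, e2, neg_sub]
        refine left_to_pair hwo hmono hSmonic ?_
        rw [hrw, show a * wf * b = c * wg from heq]
        exact H2
end

section
/- Let 𝓑 be a linearly ordered set, N a positive integer, X = {b(n) : b ∈ 𝓑, n ∈ ℤ} ordered by a(m) < b(n) iff m < n or (m = n and a < b), and take the deg-lex order on X*. Let S⁽⁻⁾ ⊆ k⟨X⟩ be the set of polynomials Σ_{s=0}^{N} (−1)^s C(N,s) ( b(n−s)a(m+s) − a(m+s)b(n−s) ) for a, b ∈ 𝓑 and m, n ∈ ℤ (normalized to be monic), and suppose S⁽⁻⁾ is a Gröbner–Shirshov basis in k⟨X⟩. Then S' = S⁽⁻⁾·X*·I ∪ { a(n)·I : a ∈ 𝓑, n ≥ 0 } is a Gröbner–Shirshov basis in the free left k⟨X⟩-module mod_{k⟨X⟩}⟨I⟩ on one generator I, with respect to the order ≺ on X*I induced by the deg-lex order on X*. -/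
/-! The set `S' = S⁽⁻⁾·X*·I ∪ {a(n)·I : n ≥ 0}` is a Gröbner–Shirshov basis of the
Verma module over the coefficient algebra of a free Lie conformal algebra, in the
free left `k⟨X⟩`-module on one generator `I` (identified with `k⟨X⟩`, `I = 1`). -/

open MonoidAlgebra

variable {k X : Type*} [Field k]

variable (B : Type*) [LinearOrder B] (N : ℕ)

/-- The order on `X = {b(n)}`: `a(m) < b(n)` iff `m < n`, or `m = n` and `a < b`. -/
def LtGen (p q : B × ℤ) : Prop := p.2 < q.2 ∨ (p.2 = q.2 ∧ p.1 < q.1)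

/-- The deg-lex order on `X*`: compare first by length, then lexicographically. -/
def DegLexFM (u v : FreeMonoid (B × ℤ)) : Prop :=
  u.length < v.length ∨ (u.length = v.length ∧ List.Lex (LtGen B) u.toList v.toList)

/-- The relation `∑_{s=0}^{N} (−1)^s C(N,s) (b(n−s)a(m+s) − a(m+s)b(n−s)) ∈ k⟨X⟩`. -/
noncomputable def confRelPoly (k : Type*) [Field k] (a b : B) (m n : ℤ) :
    FreeAssocAlg k (B × ℤ) :=
  ∑ s ∈ Finset.range (N + 1), ((-1 : k) ^ s * (N.choose s : k)) •
    (MonoidAlgebra.single (FreeMonoid.of (b, n - s)) (1 : k) *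
        MonoidAlgebra.single (FreeMonoid.of (a, m + s)) (1 : k) -
      MonoidAlgebra.single (FreeMonoid.of (a, m + s)) (1 : k) *
        MonoidAlgebra.single (FreeMonoid.of (b, n - s)) (1 : k))

/-- `S⁽⁻⁾`: the relations `confRelPoly`, normalized (by a nonzero scalar) to be monic. -/
noncomputable def Sminus (k : Type*) [Field k] : Set (FreeAssocAlg k (B × ℤ)) :=
  {g | ∃ (a b : B) (m n : ℤ) (c : k), c ≠ 0 ∧ g = c • confRelPoly B N k a b m n ∧
        IsMonicPoly (DegLexFM B) g}

/-! ### Auxiliary lemmas -/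

section Aux

set_option linter.unusedSectionVars false

variable {B} {N}

instance : IsAsymm (B × ℤ) (LtGen B) where
  asymm p q h h' := by
    rcases h with h | ⟨h1, h2⟩ <;> rcases h' with h' | ⟨h1', h2'⟩
    · omega
    · omega
    · omega
    · exact absurd h2' (not_lt.2 h2.le)

theorem degLex_asymm {u v : FreeMonoid (B × ℤ)} (h : DegLexFM B u v) (h' : DegLexFM B v u) : False := by
  rcases h with h | ⟨h1, h2⟩ <;> rcases h' with h' | ⟨h1', h2'⟩
  · omega
  · omega
  · omega
  · exact asymm h2 h2'

theorem lex_append {α : Type*} {r : α → α → Prop} :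
    ∀ {l₁ l₂ : List α} (t₁ t₂ : List α), l₁.length = l₂.length → List.Lex r l₁ l₂ →
      List.Lex r (l₁ ++ t₁) (l₂ ++ t₂)
  | _, _, t₁, t₂, hl, .rel h => .rel h
  | _, _, t₁, t₂, hl, .cons h => .cons (lex_append t₁ t₂ (by simpa using hl) h)
  | _, _, _, _, hl, .nil => by simp at hl

theorem degLex_mul_right {u v : FreeMonoid (B × ℤ)} (w : FreeMonoid (B × ℤ))
    (h : DegLexFM B u v) : DegLexFM B (u * w) (v * w) := by
  rcases h with h | ⟨h1, h2⟩
  · exact Or.inl (by simp [FreeMonoid.length_mul]; omega)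
  · exact Or.inr ⟨by simp [FreeMonoid.length_mul, h1],
      by simpa [FreeMonoid.toList_mul] using
        lex_append _ _ (by simpa [FreeMonoid.length] using h1) h2⟩

theorem degLex_mul_left {u v : FreeMonoid (B × ℤ)} (w : FreeMonoid (B × ℤ))
    (h : DegLexFM B u v) : DegLexFM B (w * u) (w * v) := by
  rcases h with h | ⟨h1, h2⟩
  · exact Or.inl (by simp [FreeMonoid.length_mul]; omega)
  · exact Or.inr ⟨by simp [FreeMonoid.length_mul, h1],
      by simpa [FreeMonoid.toList_mul] using List.Lex.append_left _ h2 _⟩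

theorem leadWord_unique {lt : FreeMonoid (B × ℤ) → FreeMonoid (B × ℤ) → Prop}
    (hasymm : ∀ {u v}, lt u v → lt v u → False)
    {f : FreeAssocAlg k (B × ℤ)} {w₁ w₂ : FreeMonoid (B × ℤ)}
    (h₁ : LeadWord lt f w₁) (h₂ : LeadWord lt f w₂) : w₁ = w₂ := by
  by_contra hne
  exact hasymm (h₂.2 w₁ h₁.1 hne) (h₁.2 w₂ h₂.1 (Ne.symm hne))

theorem mul_single_eval {f : FreeAssocAlg k X} (u x : FreeMonoid X) :
    (f * MonoidAlgebra.single u (1 : k)).coeff (x * u) = f.coeff x := by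
  rw [MonoidAlgebra.coeff_mul_single_eq_coeff_mul (x := f) x
    (fun a _ => ⟨fun h => mul_right_cancel h, fun h => by rw [h]⟩), mul_one]

theorem mul_single_ne_zero {f : FreeAssocAlg k X} {u z : FreeMonoid X}
    (h : (f * MonoidAlgebra.single u (1 : k)).coeff z ≠ 0) : ∃ x, z = x * u ∧ f.coeff x ≠ 0 := by
  by_cases hd : ∃ d, z = d * u
  · obtain ⟨d, rfl⟩ := hd
    exact ⟨d, rfl, by rwa [mul_single_eval] at h⟩
  · exact absurd (MonoidAlgebra.mul_single_apply_of_not_exists_mul _ _ hd) h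

theorem leadWord_mul_single {lt : FreeMonoid X → FreeMonoid X → Prop}
    (hmul : ∀ {u v} (w : FreeMonoid X), lt u v → lt (u * w) (v * w))
    {f : FreeAssocAlg k X} {w : FreeMonoid X} (h : LeadWord lt f w) (u : FreeMonoid X) :
    LeadWord lt (f * MonoidAlgebra.single u (1 : k)) (w * u) := by
  constructor
  · rw [mul_single_eval]; exact h.1
  · intro z hz hne
    obtain ⟨x, rfl, hx⟩ := mul_single_ne_zero hz
    exact hmul u (h.2 x hx (fun hxw => hne (by rw [hxw])))

namespace TML

variable {lt : FreeMonoid X → FreeMonoid X → Prop} {R : Set (FreeAssocAlg k X)}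
  {w : FreeMonoid X}

theorem zero : TrivialModLeft lt R 0 w :=
  ⟨0, Fin.elim0, Fin.elim0, Fin.elim0, Fin.elim0, fun i => i.elim0, fun i => i.elim0,
    by simp, fun i => i.elim0⟩

theorem congr {h h' : FreeAssocAlg k X} (he : h = h') (ht : TrivialModLeft lt R h w) :
    TrivialModLeft lt R h' w := he ▸ ht

theorem add {h₁ h₂ : FreeAssocAlg k X} (t₁ : TrivialModLeft lt R h₁ w)
    (t₂ : TrivialModLeft lt R h₂ w) : TrivialModLeft lt R (h₁ + h₂) w := by
  obtain ⟨n₁, α₁, a₁, r₁, wr₁, hr₁, hl₁, he₁, ho₁⟩ := t₁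
  obtain ⟨n₂, α₂, a₂, r₂, wr₂, hr₂, hl₂, he₂, ho₂⟩ := t₂
  refine ⟨n₁ + n₂, Fin.append α₁ α₂, Fin.append a₁ a₂, Fin.append r₁ r₂, Fin.append wr₁ wr₂,
    ?_, ?_, ?_, ?_⟩
  · intro i
    refine Fin.addCases (fun j => ?_) (fun j => ?_) i <;>
      simp only [Fin.append_left, Fin.append_right] <;> [exact hr₁ j; exact hr₂ j]
  · intro i
    refine Fin.addCases (fun j => ?_) (fun j => ?_) i <;>
      simp only [Fin.append_left, Fin.append_right] <;> [exact hl₁ j; exact hl₂ j]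
  · rw [Fin.sum_univ_add]
    simp only [Fin.append_left, Fin.append_right]
    rw [he₁, he₂]
  · intro i
    refine Fin.addCases (fun j => ?_) (fun j => ?_) i <;>
      simp only [Fin.append_left, Fin.append_right] <;> [exact ho₁ j; exact ho₂ j]

theorem neg {h : FreeAssocAlg k X} (t : TrivialModLeft lt R h w) :
    TrivialModLeft lt R (-h) w := by
  obtain ⟨n, α, a, r, wr, hr, hl, he, ho⟩ := t
  exact ⟨n, fun i => -α i, a, r, wr, hr, hl, by
    rw [he, ← Finset.sum_neg_distrib]
    exact Finset.sum_congr rfl fun i _ => by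
      rw [← neg_mul, ← MonoidAlgebra.single_neg], ho⟩

theorem term {r : FreeAssocAlg k X} {wr : FreeMonoid X} (hr : r ∈ R)
    (hlw : LeadWord lt r wr) {a : FreeMonoid X} (hlt : lt (a * wr) w) (α : k) :
    TrivialModLeft lt R (MonoidAlgebra.single a α * r) w :=
  ⟨1, fun _ => α, fun _ => a, fun _ => r, fun _ => wr, fun _ => hr, fun _ => hlw,
    by simp, fun _ => hlt⟩

theorem sum {ι : Type*} {t : Finset ι} {F : ι → FreeAssocAlg k X}
    (h : ∀ i ∈ t, TrivialModLeft lt R (F i) w) :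
    TrivialModLeft lt R (∑ i ∈ t, F i) w := by
  classical
  induction t using Finset.induction with
  | empty => simpa using zero
  | insert _ _ hx ih =>
    rw [Finset.sum_insert hx]
    exact add (h _ (Finset.mem_insert_self _ _)) (ih fun i hi => h i (Finset.mem_insert_of_mem hi))

end TML

theorem confRel_support {a b : B} {m n : ℤ} {w : FreeMonoid (B × ℤ)}
    (hw : (confRelPoly B N k a b m n).coeff w ≠ 0) :
    ∃ x y : B × ℤ, w = FreeMonoid.of x * FreeMonoid.of y ∧ x.2 + y.2 = m + n := by
  rw [confRelPoly, MonoidAlgebra.coeff_sum, Finsupp.finsetSum_apply] at hw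
  obtain ⟨s, -, hs⟩ := Finset.exists_ne_zero_of_sum_ne_zero hw
  rw [MonoidAlgebra.coeff_smul_apply, MonoidAlgebra.coeff_sub, Finsupp.sub_apply, MonoidAlgebra.single_mul_single,
    MonoidAlgebra.single_mul_single, MonoidAlgebra.coeff_single, MonoidAlgebra.coeff_single] at hs
  by_cases h1 : w = FreeMonoid.of (b, n - s) * FreeMonoid.of (a, m + s)
  · exact ⟨_, _, h1, by simp; ring⟩
  by_cases h2 : w = FreeMonoid.of (a, m + s) * FreeMonoid.of (b, n - s)
  · exact ⟨_, _, h2, by simp⟩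
  · rw [Finsupp.single_eq_of_ne' (fun h => h1 h.symm),
      Finsupp.single_eq_of_ne' (fun h => h2 h.symm)] at hs
    simp at hs

end Aux

section Aux2

set_option linter.unusedSectionVars false

variable {B} {N}

theorem leadWord_single {lt : FreeMonoid X → FreeMonoid X → Prop} (w : FreeMonoid X) :
    LeadWord lt (MonoidAlgebra.single w (1 : k)) w := by
  constructor
  · simp
  · intro u hu hne
    exact absurd (Finsupp.single_eq_of_ne' (Ne.symm hne)) hu

theorem right_term (A : FreeAssocAlg k X) (a b u' : FreeMonoid X) (α : k) :
    MonoidAlgebra.single a α * A * MonoidAlgebra.single b (1 : k) *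
      MonoidAlgebra.single u' (1 : k) =
    MonoidAlgebra.single a α * (A * MonoidAlgebra.single (b * u') (1 : k)) := by
  rw [mul_assoc (MonoidAlgebra.single a α * A), MonoidAlgebra.single_mul_single, one_mul,
    mul_assoc]

theorem mid_term (s : FreeAssocAlg k X) (c v u' : FreeMonoid X) (β : k) :
    s * MonoidAlgebra.single c (1 : k) * MonoidAlgebra.single v β *
      MonoidAlgebra.single u' (1 : k) =
    MonoidAlgebra.single (1 : FreeMonoid X) β *
      (s * MonoidAlgebra.single (c * v * u') (1 : k)) := by
  have h1 : (MonoidAlgebra.single v β : FreeAssocAlg k X) =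
      β • MonoidAlgebra.single v (1 : k) := by rw [MonoidAlgebra.smul_single', mul_one]
  have h2 : (MonoidAlgebra.single (1 : FreeMonoid X) β : FreeAssocAlg k X) =
      β • (1 : FreeAssocAlg k X) := by
    rw [MonoidAlgebra.one_def, MonoidAlgebra.smul_single', mul_one]
  rw [h1, h2, mul_smul_comm, smul_mul_assoc, smul_mul_assoc, one_mul]
  congr 1
  rw [mul_assoc s, MonoidAlgebra.single_mul_single, one_mul, mul_assoc s,
    MonoidAlgebra.single_mul_single, one_mul]

theorem left_term (D : FreeAssocAlg k X) (q : FreeAssocAlg k X) (v c : FreeMonoid X) (β : k) :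
    MonoidAlgebra.single v β * MonoidAlgebra.single c (1 : k) * q =
      MonoidAlgebra.single (v * c) β * q := by
  rw [MonoidAlgebra.single_mul_single, mul_one]

/-- Converting algebra-triviality into module-triviality after right multiplication. -/
theorem TML_of_TMA {R : Set (FreeAssocAlg k (B × ℤ))}
    (hR : ∀ s ∈ Sminus B N k, ∀ u : FreeMonoid (B × ℤ),
      s * MonoidAlgebra.single u (1 : k) ∈ R)
    {h₀ : FreeAssocAlg k (B × ℤ)} {w₀ : FreeMonoid (B × ℤ)}
    (ht : TrivialModAlg (DegLexFM B) (Sminus B N k) h₀ w₀) (u' : FreeMonoid (B × ℤ)) :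
    TrivialModLeft (DegLexFM B) R (h₀ * MonoidAlgebra.single u' (1 : k)) (w₀ * u') := by
  obtain ⟨n, α, a, b, s, ws, hmem, hlw, heq, hlt⟩ := ht
  refine ⟨n, α, a, fun i => s i * MonoidAlgebra.single (b i * u') (1 : k),
    fun i => ws i * (b i * u'), fun i => hR _ (hmem i) _,
    fun i => leadWord_mul_single (fun {x y} w h => degLex_mul_right w h) (hlw i) _, ?_, ?_⟩
  · rw [heq, Finset.sum_mul]
    exact Finset.sum_congr rfl fun i _ => right_term _ _ _ _ _
  · intro i
    have h : (a i * ws i * b i) * u' = a i * (ws i * (b i * u')) := by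
      simp [mul_assoc]
    rw [← h]
    exact degLex_mul_right u' (hlt i)

theorem sum_repr_right (D : FreeAssocAlg k X) (q : FreeAssocAlg k X) (c : FreeMonoid X) :
    D * MonoidAlgebra.single c (1 : k) * q =
      ∑ v ∈ D.coeff.support, MonoidAlgebra.single (v * c) (D.coeff v) * q := by
  classical
  conv_lhs => rw [← MonoidAlgebra.sum_coeff_single D]
  rw [Finsupp.sum, Finset.sum_mul, Finset.sum_mul]
  exact Finset.sum_congr rfl fun v _ => left_term D q v c (D.coeff v)

theorem sum_repr_mid (s : FreeAssocAlg k X) (D : FreeAssocAlg k X) (c u' : FreeMonoid X) :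
    s * MonoidAlgebra.single c (1 : k) * D * MonoidAlgebra.single u' (1 : k) =
      ∑ v ∈ D.coeff.support, MonoidAlgebra.single (1 : FreeMonoid X) (D.coeff v) *
        (s * MonoidAlgebra.single (c * v * u') (1 : k)) := by
  classical
  conv_lhs => rw [← MonoidAlgebra.sum_coeff_single D]
  rw [Finsupp.sum, Finset.mul_sum, Finset.sum_mul]
  exact Finset.sum_congr rfl fun v _ => mid_term s c v u' (D.coeff v)

end Aux2
section Aux3

set_option linter.unusedSectionVars false

variable {B} {N}

theorem Sminus_elim {s : FreeAssocAlg k (B × ℤ)} (hs : s ∈ Sminus B N k) :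
    ∃ (m n : ℤ) (ws : FreeMonoid (B × ℤ)) (x₀ y₀ : B × ℤ),
      LeadWord (DegLexFM B) s ws ∧ s.coeff ws = 1 ∧ ws = FreeMonoid.of x₀ * FreeMonoid.of y₀ ∧
      x₀.2 + y₀.2 = m + n ∧
      (∀ w, s.coeff w ≠ 0 → ∃ x y : B × ℤ, w = FreeMonoid.of x * FreeMonoid.of y ∧ x.2 + y.2 = m + n) := by
  obtain ⟨a, b, m, n, c, hc, hse, hmonic⟩ := hs
  obtain ⟨ws, hl, hm⟩ := hmonic
  have hsupp : ∀ w, s.coeff w ≠ 0 →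
      ∃ x y : B × ℤ, w = FreeMonoid.of x * FreeMonoid.of y ∧ x.2 + y.2 = m + n := by
    intro w hw
    have h0 : (confRelPoly B N k a b m n).coeff w ≠ 0 :=
      fun h0 => hw (by rw [hse, MonoidAlgebra.coeff_smul_apply, h0, smul_zero])
    exact confRel_support h0
  obtain ⟨x₀, y₀, hws, hsum₀⟩ := hsupp ws hl.1
  exact ⟨m, n, ws, x₀, y₀, hl, hm, hws, hsum₀, hsupp⟩

theorem gen_lead {a₀ : B} {n₀ : ℤ} {wf : FreeMonoid (B × ℤ)}
    {lt : FreeMonoid (B × ℤ) → FreeMonoid (B × ℤ) → Prop}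
    (hlf : LeadWord lt (MonoidAlgebra.single (FreeMonoid.of (a₀, n₀)) (1 : k)) wf) :
    wf = FreeMonoid.of (a₀, n₀) := by
  by_contra hne
  exact hlf.1 (Finsupp.single_eq_of_ne' (Ne.symm hne))

theorem two_letter_eq {x y x₀ y₀ : B × ℤ}
    (h : FreeMonoid.of x * FreeMonoid.of y = (FreeMonoid.of x₀ * FreeMonoid.of y₀ :
      FreeMonoid (B × ℤ))) : x = x₀ ∧ y = y₀ := by
  have := congrArg FreeMonoid.toList h
  simp only [FreeMonoid.toList_mul, FreeMonoid.toList_of, List.singleton_append,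
    List.cons.injEq] at this
  exact ⟨this.1, this.2.1⟩

theorem supp_nonneg_last {s : FreeAssocAlg k (B × ℤ)} {ws : FreeMonoid (B × ℤ)}
    {x₀ y₀ : B × ℤ} {m n : ℤ}
    (hl : LeadWord (DegLexFM B) s ws) (hws : ws = FreeMonoid.of x₀ * FreeMonoid.of y₀)
    (hy₀ : 0 ≤ y₀.2) (hsum₀ : x₀.2 + y₀.2 = m + n)
    (hsupp : ∀ w, s.coeff w ≠ 0 → ∃ x y : B × ℤ, w = FreeMonoid.of x * FreeMonoid.of y ∧
      x.2 + y.2 = m + n) :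
    ∀ v, s.coeff v ≠ 0 → ∃ v' x, v = v' * FreeMonoid.of x ∧ 0 ≤ x.2 := by
  intro v hv
  obtain ⟨x, y, rfl, hxy⟩ := hsupp v hv
  by_cases hy : 0 ≤ y.2
  · exact ⟨FreeMonoid.of x, y, rfl, hy⟩
  exfalso
  push_neg at hy
  have hne : FreeMonoid.of x * FreeMonoid.of y ≠ ws := by
    intro h
    rw [hws] at h
    have := (two_letter_eq h).2
    rw [this] at hy
    omega
  have hlt := hl.2 _ hv hne
  rw [hws] at hlt
  rcases hlt with hlen | ⟨-, hlex⟩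
  · simp [FreeMonoid.length_mul] at hlen
  · simp only [FreeMonoid.toList_mul, FreeMonoid.toList_of, List.singleton_append] at hlex
    have hx : x₀.2 < x.2 := by omega
    cases hlex with
    | rel h => rcases h with h | ⟨h, -⟩ <;> omega
    | cons h => omega

theorem TML_supp {R : Set (FreeAssocAlg k (B × ℤ))}
    (hgen : ∀ (a : B) (n : ℤ), 0 ≤ n →
      MonoidAlgebra.single (FreeMonoid.of (a, n)) (1 : k) ∈ R)
    {h : FreeAssocAlg k (B × ℤ)} {w : FreeMonoid (B × ℤ)}
    (hk : ∀ v, h.coeff v ≠ 0 → (∃ v' x, v = v' * FreeMonoid.of x ∧ 0 ≤ x.2) ∧ DegLexFM B v w) :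
    TrivialModLeft (DegLexFM B) R h w := by
  classical
  refine TML.congr (h := ∑ v ∈ h.coeff.support, MonoidAlgebra.single v (h.coeff v))
    (by exact MonoidAlgebra.sum_coeff_single h) (TML.sum fun v hv => ?_)
  have hv' : h.coeff v ≠ 0 := Finsupp.mem_support_iff.1 hv
  obtain ⟨⟨v', x, hvx, hx⟩, hlt⟩ := hk _ hv'
  have hsplit : MonoidAlgebra.single v (h.coeff v) =
      MonoidAlgebra.single v' (h.coeff v) * MonoidAlgebra.single (FreeMonoid.of x) (1 : k) := by
    rw [MonoidAlgebra.single_mul_single, mul_one, ← hvx]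
  rw [hsplit]
  refine TML.term ?_ (leadWord_single _) (by rw [← hvx]; exact hlt) _
  have := hgen x.1 x.2 hx
  rwa [Prod.mk.eta] at this

end Aux3
theorem GSB_for_verma_module_of_conformal (hN : 0 < N)
    (hGSB : IsGSBasisAlg (DegLexFM B) (Sminus B N k)) :
    IsGSBasisModI (DegLexFM B)
      ({x : FreeAssocAlg k (B × ℤ) | ∃ s ∈ Sminus B N k, ∃ u : FreeMonoid (B × ℤ),
          x = s * MonoidAlgebra.single u (1 : k)} ∪
       {x : FreeAssocAlg k (B × ℤ) | ∃ (a : B) (n : ℤ), 0 ≤ n ∧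
          x = MonoidAlgebra.single (FreeMonoid.of (a, n)) (1 : k)}) := by
  have hasym : ∀ {u v : FreeMonoid (B × ℤ)}, DegLexFM B u v → DegLexFM B v u → False :=
    fun h h' => degLex_asymm h h'
  have hmr : ∀ {x y : FreeMonoid (B × ℤ)} (w : FreeMonoid (B × ℤ)),
      DegLexFM B x y → DegLexFM B (x * w) (y * w) := fun w h => degLex_mul_right w h
  intro f hf g hg wf wg a hlf hlg heq
  have hRleft : ∀ s' ∈ Sminus B N k, ∀ u : FreeMonoid (B × ℤ),
      s' * MonoidAlgebra.single u (1 : k) ∈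
        ({x : FreeAssocAlg k (B × ℤ) | ∃ s ∈ Sminus B N k, ∃ u : FreeMonoid (B × ℤ),
            x = s * MonoidAlgebra.single u (1 : k)} ∪
         {x : FreeAssocAlg k (B × ℤ) | ∃ (a : B) (n : ℤ), 0 ≤ n ∧
            x = MonoidAlgebra.single (FreeMonoid.of (a, n)) (1 : k)}) :=
    fun s' hs u => Or.inl ⟨s', hs, u, rfl⟩
  have hRgen : ∀ (a' : B) (n' : ℤ), 0 ≤ n' →
      MonoidAlgebra.single (FreeMonoid.of (a', n')) (1 : k) ∈
        ({x : FreeAssocAlg k (B × ℤ) | ∃ s ∈ Sminus B N k, ∃ u : FreeMonoid (B × ℤ),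
            x = s * MonoidAlgebra.single u (1 : k)} ∪
         {x : FreeAssocAlg k (B × ℤ) | ∃ (a : B) (n : ℤ), 0 ≤ n ∧
            x = MonoidAlgebra.single (FreeMonoid.of (a, n)) (1 : k)}) :=
    fun a' n' hn => Or.inr ⟨a', n', hn, rfl⟩
  rcases hf with hf | hf
  · -- f = s * u
    obtain ⟨s, hs, u, rfl⟩ := hf
    obtain ⟨m₁, n₁, ws, x₀, y₀, hlead_s, hmon_s, hws, hsum₀, hsupp_s⟩ := Sminus_elim hs
    have hwf : wf = ws * u :=
      leadWord_unique hasym hlf (leadWord_mul_single hmr hlead_s u)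
    rcases hg with hg | hg
    · -- g = s' * u'
      obtain ⟨s', hs', u', rfl⟩ := hg
      obtain ⟨m₂, n₂, ws', x₀', y₀', hlead_s', hmon_s', hws', hsum₀', hsupp_s'⟩ := Sminus_elim hs'
      have hwg : wg = ws' * u' :=
        leadWord_unique hasym hlg (leadWord_mul_single hmr hlead_s' u')
      have hEq : ws.toList ++ u.toList = a.toList ++ (ws'.toList ++ u'.toList) := by
        have h0 : ws * u = a * (ws' * u') := by rw [← hwf, ← hwg]; exact heq
        simpa [FreeMonoid.toList_mul] using congrArg FreeMonoid.toList h0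
      have hlws : ws.toList.length = 2 := by rw [hws]; rfl
      have hlws' : ws'.toList.length = 2 := by rw [hws']; rfl
      by_cases hcase : 2 ≤ a.toList.length
      · -- u = c * ws' * u', a = ws * c
        have h1 : ws.toList <+: a.toList :=
          List.prefix_of_prefix_length_le ⟨u.toList, hEq⟩
            ⟨ws'.toList ++ u'.toList, rfl⟩ (by omega)
        obtain ⟨C, hC⟩ := h1
        have hU : u.toList = C ++ (ws'.toList ++ u'.toList) := by
          have h2 := hEq
          rw [← hC, List.append_assoc] at h2
          exact List.append_cancel_left h2
        have ha : a = ws * FreeMonoid.ofList C := by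
          apply FreeMonoid.toList.injective
          simp [FreeMonoid.toList_mul, ← hC]
        have hu : u = FreeMonoid.ofList C * ws' * u' := by
          apply FreeMonoid.toList.injective
          simp [FreeMonoid.toList_mul, hU, List.append_assoc]
        set c := FreeMonoid.ofList C with hc
        set D : FreeAssocAlg k (B × ℤ) := s - MonoidAlgebra.single ws 1 with hD
        set D' : FreeAssocAlg k (B × ℤ) := s' - MonoidAlgebra.single ws' 1 with hD'
        have hkey : s * MonoidAlgebra.single u (1 : k) -
            MonoidAlgebra.single a (1 : k) * (s' * MonoidAlgebra.single u' (1 : k)) =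
            -(s * MonoidAlgebra.single c (1 : k) * D' * MonoidAlgebra.single u' (1 : k)) +
            D * MonoidAlgebra.single c (1 : k) * (s' * MonoidAlgebra.single u' (1 : k)) := by
          have e1 : MonoidAlgebra.single u (1 : k) =
              MonoidAlgebra.single c (1 : k) * MonoidAlgebra.single ws' (1 : k) *
                MonoidAlgebra.single u' (1 : k) := by
            rw [MonoidAlgebra.single_mul_single, MonoidAlgebra.single_mul_single, one_mul,
              one_mul, hu]
          have e2 : MonoidAlgebra.single a (1 : k) =
              MonoidAlgebra.single ws (1 : k) * MonoidAlgebra.single c (1 : k) := by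
            rw [MonoidAlgebra.single_mul_single, one_mul, ha]
          rw [e1, e2, hD, hD']
          noncomm_ring
        refine TML.congr hkey.symm (TML.add (TML.neg ?_) ?_)
        · refine TML.congr (sum_repr_mid s D' c u').symm (TML.sum fun v hv => ?_)
          have hvne : v ≠ ws' := by
            intro hveq
            apply Finsupp.mem_support_iff.1 hv
            rw [hveq, hD', MonoidAlgebra.coeff_sub, Finsupp.sub_apply, hmon_s', MonoidAlgebra.coeff_single, Finsupp.single_eq_same, sub_self]
          have hsv : s'.coeff v ≠ 0 := by
            have h3 := Finsupp.mem_support_iff.1 hv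
            rwa [hD', MonoidAlgebra.coeff_sub, Finsupp.sub_apply, MonoidAlgebra.coeff_single, Finsupp.single_eq_of_ne' (Ne.symm hvne), sub_zero] at h3
          have hvlt : DegLexFM B v ws' := hlead_s'.2 v hsv hvne
          refine TML.term (hRleft s hs (c * v * u'))
            (leadWord_mul_single hmr hlead_s (c * v * u')) ?_ _
          have hJ : (1 : FreeMonoid (B × ℤ)) * (ws * (c * v * u')) = (ws * c) * (v * u') := by
            simp [mul_assoc]
          rw [hJ, hwf, hu]
          have hJ2 : ws * (c * ws' * u') = (ws * c) * (ws' * u') := by simp [mul_assoc]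
          rw [hJ2]
          exact degLex_mul_left (ws * c) (degLex_mul_right u' hvlt)
        · refine TML.congr (sum_repr_right D (s' * MonoidAlgebra.single u' (1 : k)) c).symm
            (TML.sum fun v hv => ?_)
          have hvne : v ≠ ws := by
            intro hveq
            apply Finsupp.mem_support_iff.1 hv
            rw [hveq, hD, MonoidAlgebra.coeff_sub, Finsupp.sub_apply, hmon_s, MonoidAlgebra.coeff_single, Finsupp.single_eq_same, sub_self]
          have hsv : s.coeff v ≠ 0 := by
            have h3 := Finsupp.mem_support_iff.1 hv
            rwa [hD, MonoidAlgebra.coeff_sub, Finsupp.sub_apply, MonoidAlgebra.coeff_single, Finsupp.single_eq_of_ne' (Ne.symm hvne), sub_zero] at h3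
          have hvlt : DegLexFM B v ws := hlead_s.2 v hsv hvne
          refine TML.term (hRleft s' hs' u')
            (leadWord_mul_single hmr hlead_s' u') ?_ _
          have hJ : (v * c) * (ws' * u') = v * (c * ws' * u') := by simp [mul_assoc]
          rw [hJ, ← hu, hwf]
          exact degLex_mul_right u hvlt
      · -- intersection composition
        have h1 : ws.toList <+: a.toList ++ ws'.toList := by
          refine List.prefix_of_prefix_length_le ⟨u.toList, hEq⟩
            ⟨u'.toList, by rw [List.append_assoc]⟩ (by simp; omega)
        obtain ⟨P, hP⟩ := h1
        have hpeq : ws * FreeMonoid.ofList P = a * ws' := by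
          apply FreeMonoid.toList.injective
          simp [FreeMonoid.toList_mul, hP]
        have hu : u = FreeMonoid.ofList P * u' := by
          apply FreeMonoid.toList.injective
          have h2 : ws.toList ++ u.toList = ws.toList ++ (P ++ u'.toList) := by
            rw [← List.append_assoc, hP, List.append_assoc]
            exact hEq
          simpa [FreeMonoid.toList_mul] using List.append_cancel_left h2
        have hlen : a.length < ws.length := by
          have : ws.length = 2 := hlws
          have h4 : a.length = a.toList.length := rfl
          omega
        have TMA := hGSB.1 s hs s' hs' ws ws' (FreeMonoid.ofList P) a hlead_s hlead_s'
          hpeq hlen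
        have TML0 := TML_of_TMA hRleft TMA u'
        rw [hwf, hu]
        rw [show ws * (FreeMonoid.ofList P * u') = ws * FreeMonoid.ofList P * u' from
          (mul_assoc _ _ _).symm]
        refine TML.congr ?_ TML0
        rw [sub_mul, mul_assoc s, MonoidAlgebra.single_mul_single, one_mul, mul_assoc]
    · -- g is a generator
      obtain ⟨b₀, m₀, hm₀, rfl⟩ := hg
      have hwg : wg = FreeMonoid.of (b₀, m₀) := gen_lead hlg
      have hsing : MonoidAlgebra.single a (1 : k) *
          MonoidAlgebra.single (FreeMonoid.of (b₀, m₀)) (1 : k) =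
          MonoidAlgebra.single (ws * u) (1 : k) := by
        rw [MonoidAlgebra.single_mul_single, one_mul, ← hwg, ← heq, hwf]
      rw [hsing, hwf]
      refine TML_supp hRgen fun v hv => ?_
      have hvne : v ≠ ws * u := by
        intro h'
        apply hv
        rw [h', MonoidAlgebra.coeff_sub, Finsupp.sub_apply, mul_single_eval, hmon_s, MonoidAlgebra.coeff_single, Finsupp.single_eq_same, sub_self]
      have h2 : (s * MonoidAlgebra.single u (1 : k)).coeff v ≠ 0 := by
        rwa [MonoidAlgebra.coeff_sub, Finsupp.sub_apply, MonoidAlgebra.coeff_single, Finsupp.single_eq_of_ne' (Ne.symm hvne), sub_zero] at hv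
      obtain ⟨v₀, rfl, hv₀⟩ := mul_single_ne_zero h2
      have hv₀ne : v₀ ≠ ws := fun h => hvne (by rw [h])
      refine ⟨?_, degLex_mul_right u (hlead_s.2 v₀ hv₀ hv₀ne)⟩
      rcases List.eq_nil_or_concat' u.toList with hu | ⟨L, x, hu⟩
      · have hu1 : u = 1 := by
          apply FreeMonoid.toList.injective
          simp [hu]
        have hws_eq : ws = a * FreeMonoid.of (b₀, m₀) := by
          rw [← mul_one ws, ← hu1, ← hwf, heq, hwg]
        have hy₀ : y₀ = (b₀, m₀) := by
          have h3 : [x₀] ++ [y₀] = a.toList ++ [(b₀, m₀)] := by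
            have := congrArg FreeMonoid.toList (hws.symm.trans hws_eq)
            simpa [FreeMonoid.toList_mul] using this
          have h4 := (List.append_inj' h3 rfl).2
          simpa using h4
        obtain ⟨v', x, hsplit, hx⟩ := supp_nonneg_last hlead_s hws
          (by rw [hy₀]; exact hm₀) hsum₀ hsupp_s v₀ hv₀
        exact ⟨v', x, by rw [hu1, mul_one, hsplit], hx⟩
      · have hx : x = (b₀, m₀) := by
          have h3 : ws * u = a * FreeMonoid.of (b₀, m₀) := by rw [← hwf, heq, hwg]
          have h4 : (ws.toList ++ L) ++ [x] = a.toList ++ [(b₀, m₀)] := by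
            have := congrArg FreeMonoid.toList h3
            simpa [FreeMonoid.toList_mul, hu, List.append_assoc] using this
          simpa using (List.append_inj' h4 rfl).2
        refine ⟨v₀ * FreeMonoid.ofList L, x, ?_, by rw [hx]; exact hm₀⟩
        apply FreeMonoid.toList.injective
        simp [FreeMonoid.toList_mul, hu]
  · -- f is a generator
    obtain ⟨a₀, n₀, hn₀, rfl⟩ := hf
    have hwf : wf = FreeMonoid.of (a₀, n₀) := gen_lead hlf
    rcases hg with hg | hg
    · exfalso
      obtain ⟨s', hs', u', rfl⟩ := hg
      obtain ⟨m₂, n₂, ws', x₀', y₀', hlead_s', hmon_s', hws', hsum₀', hsupp_s'⟩ := Sminus_elim hs'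
      have hwg : wg = ws' * u' :=
        leadWord_unique hasym hlg (leadWord_mul_single hmr hlead_s' u')
      have hlen := congrArg FreeMonoid.length heq
      rw [hwf, hwg, hws'] at hlen
      simp [FreeMonoid.length_mul] at hlen
      omega
    · obtain ⟨b₀, m₀, hm₀, rfl⟩ := hg
      have hwg : wg = FreeMonoid.of (b₀, m₀) := gen_lead hlg
      have ha : a = 1 := by
        have hlen := congrArg FreeMonoid.length heq
        rw [hwf, hwg] at hlen
        simp only [FreeMonoid.length_of, FreeMonoid.length_mul] at hlen
        have h5 : a.length = 0 := by omega
        exact FreeMonoid.length_eq_zero.1 h5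
      have hfg : FreeMonoid.of (a₀, n₀) = FreeMonoid.of (b₀, m₀) := by
        rw [← hwf, heq, hwg, ha, one_mul]
      refine TML.congr (h := 0) ?_ TML.zero
      rw [ha, ← MonoidAlgebra.one_def, one_mul, hfg, sub_self]
end
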